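/- The following two facts hold, exhibiting a contractive homomorphism of the algebra O(Ω_A) for the domain Ω_A of strictly upper-triangular-ball type in ℂ³ (A₁ = E₁₁, A₂ = E₁₂, A₃ = E₂₂) which is not completely contractive: (a) for all (x,y,z) ∈ ℂ³ with |x|² + |y|² + |z|² ≤ 1, the operator norm of the 2×2 matrix [[x/2, y],[0, z]] is at most 1; (b) the 2×6 complex matrix with first row (1/2, 0, 0, 0, 1, 0) and second row (0, 0, 0, 0, 0, 1) has operator norm squared equal to 5/4, which is strictly greater than 1. -/

import Mathlib

/-!
(a) The operator norm is dominated by the Hilbert–Schmidt norm, and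
`‖x/2‖² + ‖y‖² + ‖z‖² ≤ 1` for the matrix `[[x/2, y], [0, z]]`.
(b) By the C⋆-identity `‖M‖² = ‖M Mᴴ‖`, and here `M Mᴴ = diag(5/4, 1)`, whose norm is `5/4`.
-/

open scoped Kronecker

/-- The operator norm of a complex matrix, viewed as a linear map between
Euclidean spaces (standard `ℓ²` norms). -/
noncomputable def opNorm {m n : Type*} [Fintype m] [Fintype n] [DecidableEq n]
    (M : Matrix m n ℂ) : ℝ :=
  ‖LinearMap.toContinuousLinearMap (Matrix.toEuclideanLin M)‖

open Matrix

variable {m n : Type*} [Fintype m] [Fintype n] [DecidableEq n]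

section Frobenius

attribute [local instance] frobeniusNormedAddCommGroup

lemma opNorm_le_sqrt_sum_norm_sq (M : Matrix m n ℂ) :
    opNorm M ≤ √(∑ i, ∑ j, ‖M i j‖ ^ 2) := by
  refine ContinuousLinearMap.opNorm_le_bound _ (by positivity) fun v => ?_
  have h := frobenius_norm_mul M (replicateCol Unit v.ofLp)
  rw [← replicateCol_mulVec, frobenius_norm_replicateCol, frobenius_norm_replicateCol,
    frobenius_norm_def, ← Real.sqrt_eq_rpow] at h
  simp only [WithLp.toLp_ofLp, Real.rpow_two] at h
  exact h

end Frobenius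

section L2Operator

open scoped Matrix.Norms.L2Operator

lemma opNorm_sq_eq_opNorm_mul_conjTranspose [DecidableEq m] (M : Matrix m n ℂ) :
    opNorm M ^ 2 = opNorm (M * Mᴴ) := by
  change ‖M‖ ^ 2 = ‖M * Mᴴ‖
  rw [sq, ← l2_opNorm_conjTranspose M, ← l2_opNorm_conjTranspose_mul_self,
    conjTranspose_conjTranspose]

lemma opNorm_diagonal [DecidableEq m] (v : m → ℂ) : opNorm (diagonal v) = ‖v‖ :=
  l2_opNorm_diagonal v

end L2Operator

lemma opNorm_upperTriangular_le_one {x y z : ℂ} (h : ‖x‖ ^ 2 + ‖y‖ ^ 2 + ‖z‖ ^ 2 ≤ 1) :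
    opNorm !![x / 2, y; 0, z] ≤ 1 := by
  refine (opNorm_le_sqrt_sum_norm_sq _).trans (Real.sqrt_le_one.mpr ?_)
  simp only [Fin.sum_univ_two, of_apply, cons_val', cons_val_zero, cons_val_one, empty_val',
    cons_val_fin_one, norm_div, norm_zero, Complex.norm_two]
  nlinarith [norm_nonneg x]

lemma opNorm_sq_two_by_six_eq :
    opNorm !![(1 / 2 : ℂ), 0, 0, 0, 1, 0; 0, 0, 0, 0, 0, 1] ^ 2 = 5 / 4 := by
  have hdiag : !![(1 / 2 : ℂ), 0, 0, 0, 1, 0; 0, 0, 0, 0, 0, 1] *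
      (!![(1 / 2 : ℂ), 0, 0, 0, 1, 0; 0, 0, 0, 0, 0, 1])ᴴ = diagonal ![5 / 4, 1] := by
    ext i j
    fin_cases i <;> fin_cases j <;> norm_num [mul_apply, Fin.sum_univ_succ, map_ofNat]
  rw [opNorm_sq_eq_opNorm_mul_conjTranspose, hdiag, opNorm_diagonal]
  norm_num [Pi.norm_def, Fin.univ_succ]

/-- A contractive but not completely contractive homomorphism on `𝒪(Ω_A)` for the upper
triangular matrix ball in `ℂ³` (`A₁ = E₁₁`, `A₂ = E₁₂`, `A₃ = E₂₂`):
(a) for `|x|² + |y|² + |z|² ≤ 1`, `‖[[x/2, y],[0, z]]‖ ≤ 1`;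
(b) the 2×6 matrix with rows `(1/2,0,0,0,1,0)` and `(0,0,0,0,0,1)` has squared operator
norm `5/4 > 1`. -/
theorem stmt10 :
    (∀ x y z : ℂ, ‖x‖ ^ 2 + ‖y‖ ^ 2 + ‖z‖ ^ 2 ≤ 1 →
      opNorm !![x / 2, y; 0, z] ≤ 1) ∧
    opNorm !![(1 / 2 : ℂ), 0, 0, 0, 1, 0; 0, 0, 0, 0, 0, 1] ^ 2 = 5 / 4 ∧
    1 < opNorm !![(1 / 2 : ℂ), 0, 0, 0, 1, 0; 0, 0, 0, 0, 0, 1] ^ 2 := by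
  refine ⟨fun _ _ _ => opNorm_upperTriangular_le_one, opNorm_sq_two_by_six_eq, ?_⟩
  rw [opNorm_sq_two_by_six_eq]
  norm_num
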